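/- (ATT identification under conditional counterfactual parallel trends with the treated.) Under consistency of the potential outcomes and Assumption (A4), if Δμ_C is a version of E[ΔY ∣ G=C, X], then E[ (1{G=T}/p_T) · (ΔY − Δμ_C(X)) ] = ATT := E[(Y₁^{(1,0)} − Y₁^{(0,0)})·1{G=T}]/p_T. Moreover, for any bounded measurable Δμ̂_C : ℝ^q → ℝ, E[ ( 1{G=T}/p_T − e_T(X)·1{G=C}/(p_T·e_C(X)) ) · (ΔY − Δμ̂_C(X)) ] = ATT. -/

import Mathlib

/-!
On `{G = T}` consistency turns `ΔY` into `Y₁^{(1,0)} - Y₀^{(0,0)}`, and the tower property over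
`𝔛` gives `E[1{G=T}·Δμ_C(X)] = E[e_T(X)·Δμ_C(X)]`. Since `e_C > 0`, versions of
`E[· ∣ G=C, X]` are unique, so consistency on `{G = C}` identifies `Δμ_C(X)` with
`E[Y₁^{(0,0)} - Y₀^{(0,0)} ∣ G=C, X]`, which (A4) replaces by the same expectation given `G = T`;
hence `E[e_T(X)·Δμ_C(X)] = E[(Y₁^{(0,0)} - Y₀^{(0,0)})·1{G=T}]`, proving the first identity.
For the second, the tower property again shows that reweighting the controls by `e_T/e_C`
balances them with the treated: `E[(e_T/e_C)(X)·1{G=C}·(ΔY - Δμ̂_C(X))]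
= E[1{G=T}·(Δμ_C - Δμ̂_C)(X)]`, so the outcome model `Δμ̂_C` cancels and the first identity applies.
-/

open MeasureTheory ProbabilityTheory Filter Topology

/-- Group label: `T` = treated (`g(A)=(1,0)`), `N` = neighboring control (`g(A)=(0,1)`),
`C` = non-neighboring control (`g(A)=(0,0)`). -/
inductive GLabel : Type
  | T | N | C
  deriving DecidableEq

instance : MeasurableSpace GLabel := ⊤

/-- The σ-algebra `𝔛` generated by the covariates `X`. -/
def sigmaX {Ω : Type} {q : ℕ} (X : Ω → (Fin q → ℝ)) : MeasurableSpace Ω :=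
  MeasurableSpace.comap X inferInstance

/-- The indicator `1{G = g}` as a real-valued function. -/
def indG {Ω : Type} (G : Ω → GLabel) (g : GLabel) (ω : Ω) : ℝ :=
  if G ω = g then 1 else 0

/-- `f` is a version of the conditional expectation `E[Z ∣ G = g, X]`:
it is measurable and `E[Z·1{G=g} ∣ 𝔛] = f(X)·e_g(X)` `P`-a.s. -/
def IsCondVersion {Ω : Type} [MeasurableSpace Ω] (P : Measure Ω) {q : ℕ}
    (X : Ω → (Fin q → ℝ)) (G : Ω → GLabel) (e : GLabel → (Fin q → ℝ) → ℝ)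
    (g : GLabel) (Z : Ω → ℝ) (f : (Fin q → ℝ) → ℝ) : Prop :=
  Measurable f ∧
    P[(fun ω => Z ω * indG G g ω) | sigmaX X] =ᵐ[P] (fun ω => f (X ω) * e g (X ω))

theorem integral_mul_eq_integral_mul_of_condExp_ae_eq {Ω : Type*} {m m₀ : MeasurableSpace Ω}
    {μ : Measure Ω} (hm : m ≤ m₀) [SigmaFinite (μ.trim hm)] {f Z φ : Ω → ℝ}
    (hf : StronglyMeasurable[m] f) (hfZ : Integrable (fun ω => f ω * Z ω) μ)
    (hZ : Integrable Z μ) (hφ : μ[Z | m] =ᵐ[μ] φ) :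
    ∫ ω, f ω * Z ω ∂μ = ∫ ω, f ω * φ ω ∂μ := by
  rw [← integral_condExp hm]
  refine integral_congr_ae ?_
  filter_upwards [condExp_mul_of_stronglyMeasurable_left hf hfZ hZ, hφ] with ω hpull hω
  rw [← hω]
  exact hpull

theorem stronglyMeasurable_sigmaX_comp {Ω : Type} {q : ℕ} {X : Ω → (Fin q → ℝ)}
    {h : (Fin q → ℝ) → ℝ} (hh : Measurable h) :
    StronglyMeasurable[sigmaX X] (fun ω => h (X ω)) :=
  (hh.comp (comap_measurable X)).stronglyMeasurable

theorem norm_indG_le_one {Ω : Type} (G : Ω → GLabel) (g : GLabel) (ω : Ω) :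
    ‖indG G g ω‖ ≤ 1 := by
  unfold indG
  split_ifs <;> simp

theorem mul_indG_ae_eq_of_ae_eq_on {Ω : Type} [MeasurableSpace Ω] {P : Measure Ω}
    {G : Ω → GLabel} {g : GLabel} {Z Z' : Ω → ℝ} (h : ∀ᵐ ω ∂P, G ω = g → Z ω = Z' ω) :
    (fun ω => Z ω * indG G g ω) =ᵐ[P] fun ω => Z' ω * indG G g ω := by
  filter_upwards [h] with ω hω
  by_cases hg : G ω = g <;> simp [indG, hg, hω]

section Covariates

variable {Ω : Type} [MeasurableSpace Ω] {P : Measure Ω} {q : ℕ} {X : Ω → (Fin q → ℝ)}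
  {G : Ω → GLabel} {e : GLabel → (Fin q → ℝ) → ℝ} {g : GLabel} {Z : Ω → ℝ}
  {f : (Fin q → ℝ) → ℝ}

theorem measurable_indG (hG : Measurable G) (g : GLabel) : Measurable (indG G g) :=
  (measurable_from_top (f := fun l : GLabel => if l = g then (1 : ℝ) else 0)).comp hG

theorem integrable_indG [IsFiniteMeasure P] (hG : Measurable G) (g : GLabel) :
    Integrable (indG G g) P :=
  .of_bound (measurable_indG hG g).aestronglyMeasurable 1 (ae_of_all _ (norm_indG_le_one G g))

theorem MeasureTheory.Integrable.mul_indG (hZ : Integrable Z P) (hG : Measurable G) (g : GLabel) :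
    Integrable (fun ω => Z ω * indG G g ω) P :=
  hZ.mul_bdd (measurable_indG hG g).aestronglyMeasurable (ae_of_all _ (norm_indG_le_one G g))

theorem MeasureTheory.Integrable.indG_mul (hZ : Integrable Z P) (hG : Measurable G)
    (g : GLabel) : Integrable (fun ω => indG G g ω * Z ω) P :=
  hZ.bdd_mul (measurable_indG hG g).aestronglyMeasurable (ae_of_all _ (norm_indG_le_one G g))

theorem integrable_div_comp_mul [IsFiniteMeasure P] (hX : Measurable X)
    (he : ∀ g, Measurable (e g)) (he1 : ∀ g x, e g x ≤ 1) {ε : ℝ} (hε : 0 < ε)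
    (hpos : ∀ g x, ε ≤ e g x) (g g' : GLabel) (hZ : Integrable Z P) :
    Integrable (fun ω => e g' (X ω) / e g (X ω) * Z ω) P := by
  refine hZ.bdd_mul (c := ε⁻¹) ((((he g').div (he g)).comp hX).aestronglyMeasurable)
    (ae_of_all _ fun ω => ?_)
  have hg' : 0 ≤ e g' (X ω) := hε.le.trans (hpos g' _)
  rw [Real.norm_eq_abs, abs_of_nonneg (div_nonneg hg' (hε.le.trans (hpos g _))), ← one_div]
  exact div_le_div₀ zero_le_one (he1 g' _) hε (hpos g _)

namespace IsCondVersion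

theorem integral_mul_indG [IsFiniteMeasure P] (hX : Measurable X)
    (hv : IsCondVersion P X G e g Z f) :
    ∫ ω, Z ω * indG G g ω ∂P = ∫ ω, f (X ω) * e g (X ω) ∂P := by
  rw [← integral_condExp hX.comap_le]
  exact integral_congr_ae hv.2

theorem integral_comp_mul [IsFiniteMeasure P] (hX : Measurable X)
    (hv : IsCondVersion P X G e g Z f) {h : (Fin q → ℝ) → ℝ} (hh : Measurable h)
    (hZ : Integrable (fun ω => Z ω * indG G g ω) P)
    (hhZ : Integrable (fun ω => h (X ω) * (Z ω * indG G g ω)) P) :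
    ∫ ω, h (X ω) * (Z ω * indG G g ω) ∂P = ∫ ω, h (X ω) * (f (X ω) * e g (X ω)) ∂P :=
  integral_mul_eq_integral_mul_of_condExp_ae_eq hX.comap_le
    (stronglyMeasurable_sigmaX_comp hh) hhZ hZ hv.2

theorem comp_ae_eq {Z' : Ω → ℝ} {f' : (Fin q → ℝ) → ℝ} (hv : IsCondVersion P X G e g Z f)
    (hv' : IsCondVersion P X G e g Z' f')
    (hZ : (fun ω => Z ω * indG G g ω) =ᵐ[P] fun ω => Z' ω * indG G g ω)
    (he : ∀ x, e g x ≠ 0) :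
    (fun ω => f (X ω)) =ᵐ[P] fun ω => f' (X ω) := by
  filter_upwards [hv.2.symm.trans ((condExp_congr_ae hZ).trans hv'.2)] with ω hω
  exact mul_right_cancel₀ (he (X ω)) hω

theorem integrable_comp (hX : Measurable X) (hv : IsCondVersion P X G e g Z f) {ε : ℝ}
    (hε : 0 < ε) (hpos : ∀ x, ε ≤ e g x) :
    Integrable (fun ω => f (X ω)) P := by
  have hfe : Integrable (fun ω => f (X ω) * e g (X ω)) P := integrable_condExp.congr hv.2
  refine .mono' (hfe.norm.const_mul ε⁻¹) (hv.1.comp hX).aestronglyMeasurable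
    (ae_of_all _ fun ω => ?_)
  have he : 0 < e g (X ω) := hε.trans_le (hpos _)
  rw [norm_mul, Real.norm_of_nonneg he.le, le_inv_mul_iff₀ hε, mul_comm]
  exact mul_le_mul_of_nonneg_left (hpos _) (norm_nonneg _)

theorem sub_comp [IsFiniteMeasure P] (hG : Measurable G)
    (hv : IsCondVersion P X G e g Z f)
    (hprop : P[indG G g | sigmaX X] =ᵐ[P] fun ω => e g (X ω)) (hZ : Integrable Z P)
    {h : (Fin q → ℝ) → ℝ} (hh : Measurable h) (hhX : Integrable (fun ω => h (X ω)) P) :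
    IsCondVersion P X G e g (fun ω => Z ω - h (X ω)) (fun x => f x - h x) := by
  refine ⟨hv.1.sub hh, ?_⟩
  have hsplit : (fun ω => (Z ω - h (X ω)) * indG G g ω)
      = (fun ω => Z ω * indG G g ω) - fun ω => h (X ω) * indG G g ω := by
    ext ω
    simp only [Pi.sub_apply]
    ring
  have hsub := condExp_sub (hZ.mul_indG hG g) (hhX.mul_indG hG g) (sigmaX X)
  have hpull : P[fun ω => h (X ω) * indG G g ω | sigmaX X]
      =ᵐ[P] fun ω => h (X ω) * P[indG G g | sigmaX X] ω :=
    condExp_mul_of_stronglyMeasurable_left (stronglyMeasurable_sigmaX_comp hh)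
      (hhX.mul_indG hG g) (integrable_indG hG g)
  show P[fun ω => (Z ω - h (X ω)) * indG G g ω | sigmaX X] =ᵐ[P] _
  rw [hsplit]
  filter_upwards [hsub, hpull, hv.2, hprop] with ω hsub hpull hZω hind
  rw [hsub, Pi.sub_apply, hpull, hZω, hind]
  ring

theorem integral_div_comp_mul [IsFiniteMeasure P] (hX : Measurable X) (hG : Measurable G)
    (hv : IsCondVersion P X G e g Z f) {g' : GLabel}
    (hprop' : P[indG G g' | sigmaX X] =ᵐ[P] fun ω => e g' (X ω))
    (he : ∀ g, Measurable (e g)) (heg : ∀ x, e g x ≠ 0)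
    (hZ : Integrable (fun ω => Z ω * indG G g ω) P)
    (hwZ : Integrable (fun ω => e g' (X ω) / e g (X ω) * (Z ω * indG G g ω)) P)
    (hf : Integrable (fun ω => f (X ω)) P) :
    ∫ ω, e g' (X ω) / e g (X ω) * (Z ω * indG G g ω) ∂P
      = ∫ ω, indG G g' ω * f (X ω) ∂P := by
  rw [hv.integral_comp_mul hX (h := fun x => e g' x / e g x) ((he g').div (he g)) hZ hwZ]
  calc ∫ ω, e g' (X ω) / e g (X ω) * (f (X ω) * e g (X ω)) ∂P
      = ∫ ω, f (X ω) * e g' (X ω) ∂P := by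
        refine integral_congr_ae (ae_of_all _ fun ω => ?_)
        have hne := heg (X ω)
        field_simp
    _ = ∫ ω, f (X ω) * indG G g' ω ∂P :=
        (integral_mul_eq_integral_mul_of_condExp_ae_eq hX.comap_le
          (stronglyMeasurable_sigmaX_comp hv.1) (hf.mul_indG hG g')
          (integrable_indG hG g') hprop').symm
    _ = ∫ ω, indG G g' ω * f (X ω) ∂P := by simp_rw [mul_comm]

theorem integral_indG_mul_sub_comp [IsFiniteMeasure P] (hX : Measurable X)
    (hG : Measurable G) {W : Ω → ℝ} (hv : IsCondVersion P X G e g W f)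
    (hprop : P[indG G g | sigmaX X] =ᵐ[P] fun ω => e g (X ω))
    (hZ : Integrable Z P) (hW : Integrable W P) (hf : Integrable (fun ω => f (X ω)) P) :
    ∫ ω, indG G g ω * (Z ω - f (X ω)) ∂P = ∫ ω, (Z ω - W ω) * indG G g ω ∂P := by
  have hfW : ∫ ω, f (X ω) * indG G g ω ∂P = ∫ ω, W ω * indG G g ω ∂P :=
    (integral_mul_eq_integral_mul_of_condExp_ae_eq hX.comap_le
      (stronglyMeasurable_sigmaX_comp hv.1) (hf.mul_indG hG g) (integrable_indG hG g)
      hprop).trans (hv.integral_mul_indG hX).symm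
  calc ∫ ω, indG G g ω * (Z ω - f (X ω)) ∂P
      = ∫ ω, Z ω * indG G g ω ∂P - ∫ ω, f (X ω) * indG G g ω ∂P := by
        rw [← integral_sub (hZ.mul_indG hG g) (hf.mul_indG hG g)]
        congr 1 with ω
        ring
    _ = ∫ ω, (Z ω - W ω) * indG G g ω ∂P := by
        rw [hfW, ← integral_sub (hZ.mul_indG hG g) (hW.mul_indG hG g)]
        congr 1 with ω
        ring

theorem integral_weighted_sub_comp [IsFiniteMeasure P] (hX : Measurable X) (hG : Measurable G)
    (hv : IsCondVersion P X G e g Z f)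
    (hprop : ∀ g, P[indG G g | sigmaX X] =ᵐ[P] fun ω => e g (X ω))
    (he : ∀ g, Measurable (e g)) (he1 : ∀ g x, e g x ≤ 1) {ε : ℝ} (hε : 0 < ε)
    (hpos : ∀ g x, ε ≤ e g x) (g' : GLabel) (hZ : Integrable Z P)
    {h : (Fin q → ℝ) → ℝ} (hh : Measurable h) (hhX : Integrable (fun ω => h (X ω)) P) :
    ∫ ω, (indG G g' ω - e g' (X ω) / e g (X ω) * indG G g ω) * (Z ω - h (X ω)) ∂P
      = ∫ ω, indG G g' ω * (Z ω - f (X ω)) ∂P := by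
  have hZh : Integrable (fun ω => Z ω - h (X ω)) P := hZ.sub hhX
  have hfh : Integrable (fun ω => f (X ω) - h (X ω)) P :=
    (hv.integrable_comp hX hε (hpos g)).sub hhX
  have hwZh := integrable_div_comp_mul hX he he1 hε hpos g g' (hZh.mul_indG hG g)
  have hreweight := (hv.sub_comp hG (hprop g) hZ hh hhX).integral_div_comp_mul hX hG
    (hprop g') he (fun x => (hε.trans_le (hpos g x)).ne') (hZh.mul_indG hG g) hwZh hfh
  calc ∫ ω, (indG G g' ω - e g' (X ω) / e g (X ω) * indG G g ω) * (Z ω - h (X ω)) ∂P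
      = ∫ ω, indG G g' ω * (Z ω - h (X ω)) ∂P
        - ∫ ω, e g' (X ω) / e g (X ω) * ((Z ω - h (X ω)) * indG G g ω) ∂P := by
        rw [← integral_sub (hZh.indG_mul hG g') hwZh]
        congr 1 with ω
        ring
    _ = ∫ ω, indG G g' ω * (Z ω - f (X ω)) ∂P := by
        rw [hreweight, ← integral_sub (hZh.indG_mul hG g') (hfh.indG_mul hG g')]
        congr 1 with ω
        ring

end IsCondVersion

end Covariates

theorem stmt_9_general
    {Ω : Type} [MeasurableSpace Ω] (P : Measure Ω) [IsProbabilityMeasure P]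
    {q : ℕ} (X : Ω → (Fin q → ℝ)) (hX : Measurable X)
    (G : Ω → GLabel) (hG : Measurable G)
    (Y0 Y1 : Ω → ℝ) (hY0 : Integrable Y0 P) (hY1 : Integrable Y1 P)
    (e : GLabel → (Fin q → ℝ) → ℝ) (he : ∀ g, Measurable (e g))
    (he1 : ∀ g x, e g x ≤ 1)
    (hprop : ∀ g : GLabel,
      P[(fun ω => indG G g ω) | sigmaX X] =ᵐ[P] (fun ω => e g (X ω)))
    (ε : ℝ) (hε : 0 < ε) (hpos : ∀ g x, ε ≤ e g x)
    (Y110 Y100 Y000 : Ω → ℝ)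
    (hI00 : Integrable Y100 P)
    (hconsT : ∀ᵐ ω ∂P, G ω = GLabel.T → Y1 ω = Y110 ω)
    (hconsC : ∀ᵐ ω ∂P, G ω = GLabel.C → Y1 ω = Y100 ω)
    (hcons0 : Y0 =ᵐ[P] Y000)
    (gT gC4 : (Fin q → ℝ) → ℝ)
    (hgT : IsCondVersion P X G e GLabel.T (fun ω => Y100 ω - Y000 ω) gT)
    (hgC4 : IsCondVersion P X G e GLabel.C (fun ω => Y100 ω - Y000 ω) gC4)
    (hA4 : ∀ᵐ ω ∂P, gT (X ω) = gC4 (X ω))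
    (ΔμC : (Fin q → ℝ) → ℝ)
    (hΔμC : IsCondVersion P X G e GLabel.C (fun ω => Y1 ω - Y0 ω) ΔμC)
    (μhatC : (Fin q → ℝ) → ℝ) (hμhatC : Measurable μhatC)
    (MC : ℝ) (hMC : ∀ x, |μhatC x| ≤ MC)
    :
    (∫ ω, (indG G GLabel.T ω / (P {ω | G ω = GLabel.T}).toReal) * ((Y1 ω - Y0 ω) - ΔμC (X ω)) ∂P
        = (∫ ω, (Y110 ω - Y100 ω) * indG G GLabel.T ω ∂P) / (P {ω | G ω = GLabel.T}).toReal) ∧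
      (∫ ω, (indG G GLabel.T ω / (P {ω | G ω = GLabel.T}).toReal
            - e GLabel.T (X ω) * indG G GLabel.C ω / ((P {ω | G ω = GLabel.T}).toReal * e GLabel.C (X ω))) *
          ((Y1 ω - Y0 ω) - μhatC (X ω)) ∂P
        = (∫ ω, (Y110 ω - Y100 ω) * indG G GLabel.T ω ∂P) / (P {ω | G ω = GLabel.T}).toReal) := by
  have hΔY : Integrable (fun ω => Y1 ω - Y0 ω) P := hY1.sub hY0
  have hΔ00 : Integrable (fun ω => Y100 ω - Y000 ω) P := hI00.sub (hY0.congr hcons0)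
  have hμhatX : Integrable (fun ω => μhatC (X ω)) P :=
    .of_bound (hμhatC.comp hX).aestronglyMeasurable MC (ae_of_all _ fun ω => hMC (X ω))
  have hΔμC_gT : (fun ω => ΔμC (X ω)) =ᵐ[P] fun ω => gT (X ω) := by
    refine (hΔμC.comp_ae_eq hgC4 (mul_indG_ae_eq_of_ae_eq_on ?_)
      fun x => (hε.trans_le (hpos _ x)).ne').trans (hA4.mono fun ω h => h.symm)
    filter_upwards [hconsC, hcons0] with ω h1 h0 hC
    rw [h1 hC, h0]
  have hATT : ∫ ω, indG G GLabel.T ω * ((Y1 ω - Y0 ω) - ΔμC (X ω)) ∂P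
      = ∫ ω, (Y110 ω - Y100 ω) * indG G GLabel.T ω ∂P := by
    calc _ = ∫ ω, indG G GLabel.T ω * ((Y1 ω - Y0 ω) - gT (X ω)) ∂P :=
          integral_congr_ae (hΔμC_gT.mono fun ω h => by simp only [h])
      _ = ∫ ω, ((Y1 ω - Y0 ω) - (Y100 ω - Y000 ω)) * indG G GLabel.T ω ∂P :=
          hgT.integral_indG_mul_sub_comp hX hG (hprop _) hΔY hΔ00
            (hgT.integrable_comp hX hε (hpos _))
      _ = _ := by
          refine integral_congr_ae (mul_indG_ae_eq_of_ae_eq_on ?_)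
          filter_upwards [hconsT, hcons0] with ω h1 h0 hT
          rw [h1 hT, h0]
          ring
  have hDR := hΔμC.integral_weighted_sub_comp hX hG hprop he he1 hε hpos GLabel.T hΔY
    hμhatC hμhatX
  refine ⟨?_, ?_⟩
  · simp_rw [div_mul_eq_mul_div, integral_div, hATT]
  · rw [← hATT, ← hDR, ← integral_div]
    congr 1 with ω
    ring

theorem stmt_9
    {Ω : Type} [MeasurableSpace Ω] (P : Measure Ω) [IsProbabilityMeasure P]
    {q : ℕ} (X : Ω → (Fin q → ℝ)) (hX : Measurable X)
    (G : Ω → GLabel) (hG : Measurable G)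
    (Y0 Y1 : Ω → ℝ) (hY0 : Integrable Y0 P) (hY1 : Integrable Y1 P)
    (e : GLabel → (Fin q → ℝ) → ℝ) (he : ∀ g, Measurable (e g))
    (he1 : ∀ g x, e g x ≤ 1)
    (hprop : ∀ g : GLabel,
      P[(fun ω => indG G g ω) | sigmaX X] =ᵐ[P] (fun ω => e g (X ω)))
    (ε : ℝ) (hε : 0 < ε) (hpos : ∀ g x, ε ≤ e g x)
    (hpT : 0 < (P {ω | G ω = GLabel.T}).toReal)
    (Y110 Y111 Y101 Y100 Y000 : Ω → ℝ)
    (hI10 : Integrable Y110 P) (hI11 : Integrable Y111 P)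
    (hI01 : Integrable Y101 P) (hI00 : Integrable Y100 P) (hI000 : Integrable Y000 P)
    (hconsT : ∀ᵐ ω ∂P, G ω = GLabel.T → Y1 ω = Y110 ω)
    (hconsN : ∀ᵐ ω ∂P, G ω = GLabel.N → Y1 ω = Y101 ω)
    (hconsC : ∀ᵐ ω ∂P, G ω = GLabel.C → Y1 ω = Y100 ω)
    (hcons0 : Y0 =ᵐ[P] Y000)
    (gT gC4 : (Fin q → ℝ) → ℝ)
    (hgT : IsCondVersion P X G e GLabel.T (fun ω => Y100 ω - Y000 ω) gT)
    (hgC4 : IsCondVersion P X G e GLabel.C (fun ω => Y100 ω - Y000 ω) gC4)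
    (hA4 : ∀ᵐ ω ∂P, gT (X ω) = gC4 (X ω))
    (ΔμC : (Fin q → ℝ) → ℝ)
    (hΔμC : IsCondVersion P X G e GLabel.C (fun ω => Y1 ω - Y0 ω) ΔμC)
    (μhatC : (Fin q → ℝ) → ℝ) (hμhatC : Measurable μhatC)
    (MC : ℝ) (hMC : ∀ x, |μhatC x| ≤ MC)
    :
    (∫ ω, (indG G GLabel.T ω / (P {ω | G ω = GLabel.T}).toReal) * ((Y1 ω - Y0 ω) - ΔμC (X ω)) ∂P
        = (∫ ω, (Y110 ω - Y100 ω) * indG G GLabel.T ω ∂P) / (P {ω | G ω = GLabel.T}).toReal) ∧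
      (∫ ω, (indG G GLabel.T ω / (P {ω | G ω = GLabel.T}).toReal
            - e GLabel.T (X ω) * indG G GLabel.C ω / ((P {ω | G ω = GLabel.T}).toReal * e GLabel.C (X ω))) *
          ((Y1 ω - Y0 ω) - μhatC (X ω)) ∂P
        = (∫ ω, (Y110 ω - Y100 ω) * indG G GLabel.T ω ∂P) / (P {ω | G ω = GLabel.T}).toReal) :=
  stmt_9_general P X hX G hG Y0 Y1 hY0 hY1 e he he1 hprop ε hε hpos Y110 Y100 Y000 hI00 hconsT
    hconsC hcons0 gT gC4 hgT hgC4 hA4 ΔμC hΔμC μhatC hμhatC MC hMC
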